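/- Let D be diagonal with positive entries and A diagonally symmetrizable with largest eigenvalue λ₁. If λ₁ > 0 then r(D e^{τA}) → +∞ as τ → +∞; if λ₁ < 0 then r(D e^{τA}) → 0 as τ → +∞. -/

import Mathlib

open Matrix

/-- Diagonally symmetrizable: `T⁻¹ * A * T` symmetric for some invertible diagonal `T`. -/
def IsDiagSymmetrizable {N : ℕ} (A : Matrix (Fin N) (Fin N) ℝ) : Prop :=
  ∃ d : Fin N → ℝ, (∀ i, d i ≠ 0) ∧
    ((Matrix.diagonal d)⁻¹ * A * Matrix.diagonal d).IsSymm

/-- The spectral radius of a real matrix: the largest modulus of its (complex) eigenvalues. -/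
noncomputable def specRad {N : ℕ} (M : Matrix (Fin N) (Fin N) ℝ) : ℝ :=
  sSup ((fun z : ℂ => ‖z‖) '' spectrum ℂ (M.map (algebraMap ℝ ℂ)))

/-- The matrix exponential. -/
noncomputable def mexp {N : ℕ} (M : Matrix (Fin N) (Fin N) ℝ) : Matrix (Fin N) (Fin N) ℝ :=
  NormedSpace.exp M


section Aux
variable {N : ℕ}

lemma spectrum_real_map_complex (M : Matrix (Fin N) (Fin N) ℝ) :
    spectrum ℝ (M.map (algebraMap ℝ ℂ)) = spectrum ℝ M := by
  ext r
  rw [spectrum.mem_iff, spectrum.mem_iff, not_iff_not]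
  have h1 : algebraMap ℝ (Matrix (Fin N) (Fin N) ℂ) r - M.map (algebraMap ℝ ℂ)
      = (algebraMap ℝ (Matrix (Fin N) (Fin N) ℝ) r - M).map (algebraMap ℝ ℂ) := by
    ext i j
    simp only [Matrix.map_apply, Matrix.algebraMap_matrix_apply, Matrix.sub_apply]
    split <;> simp
  rw [h1, Matrix.isUnit_iff_isUnit_det, Matrix.isUnit_iff_isUnit_det, ← RingHom.mapMatrix_apply,
    ← RingHom.map_det]
  simp [isUnit_iff_ne_zero]

lemma spectrum_real_conj (P M : Matrix (Fin N) (Fin N) ℝ) (hP : IsUnit P) :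
    spectrum ℝ (P * M * P⁻¹) = spectrum ℝ M := by
  obtain ⟨u, rfl⟩ := hP
  rw [← Matrix.coe_units_inv, spectrum.units_conjugate]

lemma specRad_conj (P M : Matrix (Fin N) (Fin N) ℝ) (hP : IsUnit P) :
    specRad (P * M * P⁻¹) = specRad M := by
  obtain ⟨u, rfl⟩ := hP
  unfold specRad
  let φ : Matrix (Fin N) (Fin N) ℝ →+* Matrix (Fin N) (Fin N) ℂ := (algebraMap ℝ ℂ).mapMatrix
  let v : (Matrix (Fin N) (Fin N) ℂ)ˣ := Units.map φ.toMonoidHom u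
  have h : (((u : Matrix (Fin N) (Fin N) ℝ) * M * ((u⁻¹ : (Matrix (Fin N) (Fin N) ℝ)ˣ) : Matrix (Fin N) (Fin N) ℝ)).map (algebraMap ℝ ℂ))
      = (v : Matrix (Fin N) (Fin N) ℂ) * M.map (algebraMap ℝ ℂ)
        * ((v⁻¹ : (Matrix (Fin N) (Fin N) ℂ)ˣ) : Matrix (Fin N) (Fin N) ℂ) := by
    show φ ((u : Matrix (Fin N) (Fin N) ℝ) * M * ((u⁻¹ : (Matrix (Fin N) (Fin N) ℝ)ˣ) : Matrix (Fin N) (Fin N) ℝ)) = _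
    rw [φ.map_mul, φ.map_mul]
    rfl
  rw [← Matrix.coe_units_inv, h, spectrum.units_conjugate]

end Aux

section Aux2
variable {N : ℕ}

lemma isHermitian_map_complex {M : Matrix (Fin N) (Fin N) ℝ} (hM : M.IsHermitian) :
    (M.map (algebraMap ℝ ℂ)).IsHermitian := by
  ext i j
  have hsym : M j i = M i j := by
    have := congrFun (congrFun hM i) j
    simpa [Matrix.conjTranspose_apply] using this
  simp [Matrix.conjTranspose_apply, Matrix.map_apply, Complex.conj_ofReal, hsym]

lemma specRad_of_isHermitian {M : Matrix (Fin N) (Fin N) ℝ} (hM : M.IsHermitian) :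
    specRad M = sSup (abs '' spectrum ℝ M) := by
  have hMc := isHermitian_map_complex hM
  have h1 : spectrum ℂ (M.map (algebraMap ℝ ℂ))
      = Set.range (fun i => ((hMc.eigenvalues i : ℝ) : ℂ)) := by
    rw [hMc.spectrum_eq_image_range, ← Set.range_comp]
    rfl
  have h2 : spectrum ℝ M = Set.range hMc.eigenvalues := by
    rw [← spectrum_real_map_complex M, hMc.spectrum_real_eq_range_eigenvalues]
  unfold specRad
  rw [h1, h2, ← Set.range_comp, ← Set.range_comp]
  congr 1
  ext x
  constructor
  · rintro ⟨i, rfl⟩; exact ⟨i, by simp⟩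
  · rintro ⟨i, rfl⟩; exact ⟨i, by simp⟩

lemma trace_eq_sum_eigenvalues {M : Matrix (Fin N) (Fin N) ℝ} (hM : M.IsHermitian) :
    M.trace = ∑ i, hM.eigenvalues i := by
  rw [hM.trace_eq_sum_eigenvalues]
  simp [RCLike.ofReal_real_eq_id]

lemma specRad_bounds {M : Matrix (Fin N) (Fin N) ℝ} (hN : 0 < N) (hM : M.PosSemidef) :
    specRad M ≤ M.trace ∧ M.trace ≤ N * specRad M := by
  haveI : Nonempty (Fin N) := Fin.pos_iff_nonempty.mp hN
  have h := hM.1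
  obtain ⟨i0, hi0⟩ := Finite.exists_max h.eigenvalues
  have hnonneg : ∀ i, 0 ≤ h.eigenvalues i := hM.eigenvalues_nonneg
  have hspec : specRad M = h.eigenvalues i0 := by
    rw [specRad_of_isHermitian h, h.spectrum_real_eq_range_eigenvalues, ← Set.range_comp]
    have : (abs ∘ h.eigenvalues) = h.eigenvalues := by
      funext i; exact abs_of_nonneg (hnonneg i)
    rw [this]
    refine le_antisymm (csSup_le (Set.range_nonempty _) ?_)
      (le_csSup (Set.finite_range _).bddAbove ⟨i0, rfl⟩)
    rintro _ ⟨i, rfl⟩; exact hi0 i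
  rw [hspec, trace_eq_sum_eigenvalues h]
  constructor
  · exact Finset.single_le_sum (fun i _ => hnonneg i) (Finset.mem_univ i0)
  · calc ∑ i, h.eigenvalues i ≤ Finset.univ.card • h.eigenvalues i0 :=
          Finset.sum_le_card_nsmul _ _ _ (fun i _ => hi0 i)
      _ = N * h.eigenvalues i0 := by simp [nsmul_eq_mul]

end Aux2

theorem stmt_13 {N : ℕ} (Ddiag : Fin N → ℝ) (hD : ∀ i, 0 < Ddiag i)
    (A : Matrix (Fin N) (Fin N) ℝ) (hA : IsDiagSymmetrizable A) :
    let f : ℝ → ℝ := fun τ => specRad (Matrix.diagonal Ddiag * mexp (τ • A))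
    let lam1 : ℝ := sSup (spectrum ℝ A)
    (0 < lam1 → Filter.Tendsto f Filter.atTop Filter.atTop) ∧
    (lam1 < 0 → Filter.Tendsto f Filter.atTop (nhds 0)) := by
  intro f lam1
  obtain ⟨d, hd, hSsym⟩ := hA
  set T := Matrix.diagonal d with hTdef
  have hdetT : IsUnit T.det := by
    rw [hTdef, Matrix.det_diagonal]
    exact (Finset.prod_ne_zero_iff.mpr fun i _ => hd i).isUnit
  have hT : IsUnit T := (Matrix.isUnit_iff_isUnit_det T).mpr hdetT
  set S := T⁻¹ * A * T with hSdef
  have hS : S.IsHermitian := by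
    ext i j
    have := congrFun (congrFun hSsym.eq i) j
    simpa [Matrix.conjTranspose_apply, Matrix.transpose_apply] using this
  have hA_eq : A = T * S * T⁻¹ := by
    rw [hSdef, ← mul_assoc, ← mul_assoc, Matrix.mul_nonsing_inv _ hdetT, one_mul,
      Matrix.mul_nonsing_inv_cancel_right _ _ hdetT]
  have hlamS : lam1 = sSup (spectrum ℝ S) := by
    show sSup (spectrum ℝ A) = _
    conv_lhs => rw [hA_eq]
    rw [spectrum_real_conj _ _ hT]
  have hNpos : lam1 ≠ 0 → 0 < N := by
    intro hne
    rcases Nat.eq_zero_or_pos N with h0 | h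
    · exfalso; apply hne
      subst h0
      haveI : Subsingleton (Matrix (Fin 0) (Fin 0) ℝ) :=
        ⟨fun a b => by ext i j; exact i.elim0⟩
      have hempty : spectrum ℝ A = ∅ := Set.eq_empty_iff_forall_notMem.mpr
        (fun r hr => (spectrum.mem_iff.mp hr) (isUnit_of_subsingleton _))
      show sSup (spectrum ℝ A) = 0
      rw [hempty, Real.sSup_empty]
    · exact h
  have main : 0 < N → ∃ c1 c2 : ℝ, 0 < c1 ∧ 0 < c2 ∧
      ∀ τ : ℝ, 0 ≤ τ → c1 * Real.exp (τ * lam1) ≤ f τ ∧ f τ ≤ c2 * Real.exp (τ * lam1) := by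
    intro hN
    haveI : Nonempty (Fin N) := Fin.pos_iff_nonempty.mp hN
    set μ : Fin N → ℝ := hS.eigenvalues with hμ
    set U : Matrix (Fin N) (Fin N) ℝ :=
      (Matrix.IsHermitian.eigenvectorUnitary hS : Matrix (Fin N) (Fin N) ℝ) with hU
    have hUstar : star U * U = 1 := Unitary.coe_star_mul_self _
    have hUstar' : U * star U = 1 := Unitary.coe_mul_star_self _
    have hUunit : IsUnit U := ⟨⟨U, star U, hUstar', hUstar⟩, rfl⟩
    have hUinv : U⁻¹ = star U := Matrix.inv_eq_left_inv hUstar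
    have hSeq : S = U * Matrix.diagonal μ * U⁻¹ := by
      rw [hUinv, hU, hμ]
      simpa [Function.comp, RCLike.ofReal_real_eq_id] using hS.spectral_theorem
    obtain ⟨j0, hj0⟩ := Finite.exists_max μ
    have hμspec : spectrum ℝ S = Set.range μ := by
      rw [hμ]; exact hS.spectrum_real_eq_range_eigenvalues
    have hlam1 : lam1 = μ j0 := by
      rw [hlamS, hμspec]
      refine le_antisymm (csSup_le (Set.range_nonempty _) ?_)
        (le_csSup (Set.finite_range _).bddAbove ⟨j0, rfl⟩)
      rintro _ ⟨i, rfl⟩; exact hj0 i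
    set sq : Fin N → ℝ := fun i => Real.sqrt (Ddiag i) with hsq
    have hsqpos : ∀ i, 0 < sq i := fun i => Real.sqrt_pos.mpr (hD i)
    set Dh : Matrix (Fin N) (Fin N) ℝ := Matrix.diagonal sq with hDh
    have hdetDh : IsUnit Dh.det := by
      rw [hDh, Matrix.det_diagonal]
      exact (Finset.prod_ne_zero_iff.mpr fun i _ => (hsqpos i).ne').isUnit
    have hDhunit : IsUnit Dh := (Matrix.isUnit_iff_isUnit_det _).mpr hdetDh
    have hDh2 : Dh * Dh = Matrix.diagonal Ddiag := by
      rw [hDh, Matrix.diagonal_mul_diagonal]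
      exact congrArg Matrix.diagonal (funext fun i => Real.mul_self_sqrt (hD i).le)
    have hDhH : Dhᴴ = Dh := by
      rw [hDh]; simp [Matrix.diagonal_conjTranspose]
    set c1 : ℝ := Finset.univ.inf' Finset.univ_nonempty Ddiag with hc1def
    set c2 : ℝ := Finset.univ.sup' Finset.univ_nonempty Ddiag with hc2def
    have hc1pos : 0 < c1 := by
      rw [hc1def, Finset.lt_inf'_iff]; exact fun i _ => hD i
    have hc2pos : 0 < c2 := by
      rw [hc2def, Finset.lt_sup'_iff]; exact ⟨j0, Finset.mem_univ _, hD j0⟩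
    have hNR : (0:ℝ) < (N:ℝ) := by exact_mod_cast hN
    refine ⟨c1 / N, c2 * N, by positivity, by positivity, ?_⟩
    intro τ hτ
    set q : Fin N → ℝ := fun i => Real.exp (τ * μ i) with hq
    have hqpos : ∀ i, 0 < q i := fun i => Real.exp_pos _
    have hEeq : mexp (τ • S) = U * Matrix.diagonal q * U⁻¹ := by
      have h1 : τ • S = U * Matrix.diagonal (fun i => τ * μ i) * U⁻¹ := by
        rw [hSeq, ← smul_mul_assoc, ← mul_smul_comm, ← Matrix.diagonal_smul]
        rfl
      rw [h1]
      show NormedSpace.exp _ = _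
      rw [Matrix.exp_conj U _ hUunit, Matrix.exp_diagonal]
      congr 2
      funext i
      rw [Pi.exp_def]
      simp [hq, Real.exp_eq_exp_ℝ]
    set E : Matrix (Fin N) (Fin N) ℝ := mexp (τ • S) with hE
    set B : Matrix (Fin N) (Fin N) ℝ := mexp ((τ/2) • S) with hB
    have hBH : Bᴴ = B := by
      rw [hB]
      show (NormedSpace.exp ((τ/2) • S))ᴴ = _
      rw [← Matrix.exp_conjTranspose]
      congr 1
      rw [Matrix.conjTranspose_smul, hS.eq, star_trivial]
    have hEBB : E = B * B := by
      rw [hE, hB]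
      show NormedSpace.exp (τ • S) = NormedSpace.exp ((τ/2) • S) * NormedSpace.exp ((τ/2) • S)
      rw [← Matrix.exp_add_of_commute _ _ (Commute.refl _), ← add_smul]
      norm_num
    set Mt : Matrix (Fin N) (Fin N) ℝ := Dh * E * Dh with hMt
    have hMtBD : Mt = (B * Dh)ᴴ * (B * Dh) := by
      rw [Matrix.conjTranspose_mul, hBH, hDhH, hMt, hEBB]
      simp only [mul_assoc]
    have hMtpsd : Mt.PosSemidef := hMtBD ▸ Matrix.posSemidef_conjTranspose_mul_self _
    have hEpsd : E.PosSemidef := by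
      have h2 : E = Bᴴ * B := by rw [hBH]; exact hEBB
      exact h2 ▸ Matrix.posSemidef_conjTranspose_mul_self _
    have hEdiag : ∀ i, 0 ≤ E i i := by
      intro i
      have := hEpsd.diag_nonneg (i := i)
      simpa using this
    have htrE : E.trace = ∑ i, q i := by
      rw [hEeq, Matrix.trace_conj hUunit, Matrix.trace_diagonal]
    have htrEdiag : E.trace = ∑ i, E i i := by
      simp [Matrix.trace, Matrix.diag]
    have htrMt : Mt.trace = ∑ i, Ddiag i * E i i := by
      rw [hMt, Matrix.trace_mul_cycle, hDh2]
      simp [Matrix.trace, Matrix.diag, Matrix.diagonal_mul]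
    have hlow : Real.exp (τ * lam1) ≤ E.trace := by
      rw [htrE, hlam1]
      exact Finset.single_le_sum (f := q) (fun i _ => (hqpos i).le) (Finset.mem_univ j0)
    have hhigh : E.trace ≤ N * Real.exp (τ * lam1) := by
      rw [htrE, hlam1]
      calc ∑ i, q i ≤ ∑ _i : Fin N, Real.exp (τ * μ j0) :=
            Finset.sum_le_sum (fun i _ =>
              Real.exp_le_exp.mpr (mul_le_mul_of_nonneg_left (hj0 i) hτ))
        _ = N * Real.exp (τ * μ j0) := by
            simp [Finset.sum_const, nsmul_eq_mul]
    have htrMtlow : c1 * E.trace ≤ Mt.trace := by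
      rw [htrMt, htrEdiag, Finset.mul_sum]
      exact Finset.sum_le_sum fun i _ =>
        mul_le_mul_of_nonneg_right (by rw [hc1def]; exact Finset.inf'_le _ (Finset.mem_univ i))
          (hEdiag i)
    have htrMthigh : Mt.trace ≤ c2 * E.trace := by
      rw [htrMt, htrEdiag, Finset.mul_sum]
      exact Finset.sum_le_sum fun i _ =>
        mul_le_mul_of_nonneg_right (by rw [hc2def]; exact Finset.le_sup' _ (Finset.mem_univ i))
          (hEdiag i)
    have hfτ : f τ = specRad Mt := by
      show specRad (Matrix.diagonal Ddiag * mexp (τ • A)) = _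
      have h2 : τ • A = T * (τ • S) * T⁻¹ := by
        rw [hA_eq, ← smul_mul_assoc, ← mul_smul_comm]
      have hmexpA : mexp (τ • A) = T * E * T⁻¹ := by
        rw [h2]
        show NormedSpace.exp _ = _
        rw [Matrix.exp_conj T _ hT]
        rfl
      rw [hmexpA]
      have hcomm : Matrix.diagonal Ddiag * T = T * Matrix.diagonal Ddiag := by
        rw [hTdef, Matrix.diagonal_mul_diagonal, Matrix.diagonal_mul_diagonal]
        exact congrArg Matrix.diagonal (funext fun i => mul_comm _ _)
      have hkey : Matrix.diagonal Ddiag * (T * E * T⁻¹) = (T * Dh) * Mt * (T * Dh)⁻¹ := by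
        rw [Matrix.mul_inv_rev, hMt]
        calc Matrix.diagonal Ddiag * (T * E * T⁻¹)
            = T * (Matrix.diagonal Ddiag * E) * T⁻¹ := by
              rw [← mul_assoc, ← mul_assoc, hcomm, mul_assoc T]
          _ = T * (Dh * (Dh * E * Dh) * Dh⁻¹) * T⁻¹ := by
              rw [← hDh2]
              congr 2
              simp only [mul_assoc]
              rw [Matrix.mul_nonsing_inv _ hdetDh, mul_one]
          _ = (T * Dh) * (Dh * E * Dh) * (Dh⁻¹ * T⁻¹) := by
              simp only [mul_assoc]
      rw [hkey, specRad_conj _ _ (hT.mul hDhunit)]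
    obtain ⟨hb1, hb2⟩ := specRad_bounds hN hMtpsd
    constructor
    · rw [hfτ]
      have h1 : c1 * Real.exp (τ * lam1) ≤ (N:ℝ) * specRad Mt :=
        le_trans (le_trans (mul_le_mul_of_nonneg_left hlow hc1pos.le) htrMtlow) hb2
      calc c1 / N * Real.exp (τ * lam1) = (c1 * Real.exp (τ * lam1)) / N := by ring
        _ ≤ ((N:ℝ) * specRad Mt) / N := by
            exact (div_le_div_iff_of_pos_right hNR).mpr h1
        _ = specRad Mt := by field_simp
    · rw [hfτ]
      calc specRad Mt ≤ Mt.trace := hb1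
        _ ≤ c2 * E.trace := htrMthigh
        _ ≤ c2 * ((N:ℝ) * Real.exp (τ * lam1)) := mul_le_mul_of_nonneg_left hhigh hc2pos.le
        _ = c2 * N * Real.exp (τ * lam1) := by ring
  constructor
  · intro hpos
    obtain ⟨c1, c2, hc1, hc2, hb⟩ := main (hNpos (ne_of_gt hpos))
    have hexp : Filter.Tendsto (fun τ : ℝ => c1 * Real.exp (τ * lam1))
        Filter.atTop Filter.atTop := by
      apply Filter.Tendsto.const_mul_atTop hc1
      exact Real.tendsto_exp_atTop.comp (Filter.Tendsto.atTop_mul_const hpos Filter.tendsto_id)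
    apply Filter.tendsto_atTop_mono' Filter.atTop ?_ hexp
    filter_upwards [Filter.eventually_ge_atTop 0] with τ hτ
    exact (hb τ hτ).1
  · intro hneg
    obtain ⟨c1, c2, hc1, hc2, hb⟩ := main (hNpos (ne_of_lt hneg))
    have hexp : Filter.Tendsto (fun τ : ℝ => c2 * Real.exp (τ * lam1))
        Filter.atTop (nhds 0) := by
      have h1 : Filter.Tendsto (fun τ : ℝ => τ * lam1) Filter.atTop Filter.atBot :=
        Filter.Tendsto.atTop_mul_const_of_neg hneg Filter.tendsto_id
      have h2 := Real.tendsto_exp_atBot.comp h1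
      have h3 := h2.const_mul c2
      simpa using h3
    apply squeeze_zero' ?_ ?_ hexp
    · filter_upwards [Filter.eventually_ge_atTop 0] with τ hτ
      exact le_trans (by positivity) (hb τ hτ).1
    · filter_upwards [Filter.eventually_ge_atTop 0] with τ hτ
      exact (hb τ hτ).2
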